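/- arXiv:1906.02226 — 2 statements merged into one kernel-verified Lean document; each statement's English description precedes it below -/
import Mathlib

section
/- Let $U \in \mathbb{R}^{d \times d}$ and let $A_U \in \{0,1\}^{d \times d}$ be defined by $(A_U)_{ij} = 1$ if $U_{ij} \neq 0$ and $0$ otherwise. Then the directed graph with adjacency matrix $A_U$ is acyclic if and only if $\mathrm{Tr}\, e^{U \odot U} = d$, where $\odot$ denotes the Hadamard (entrywise) product. -/
/-- A directed graph on `Fin d`, given by an edge relation, is acyclic if it contains no
nonempty closed directed walk. -/
def DiGraphAcyclic {d : ℕ} (E : Fin d → Fin d → Prop) : Prop :=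
  ¬ ∃ (k : ℕ) (v : ℕ → Fin d), 1 ≤ k ∧ v k = v 0 ∧ ∀ i < k, E (v i) (v (i + 1))

/-!
The entries of `U ⊙ U` are the squares `U i j ^ 2`, nonnegative and zero exactly where `U` is.
For a nonnegative matrix `A`, the diagonal entry `(A ^ k) i i` is a sum of products along closed
walks of length `k` through `i`, so it is positive iff such a walk uses only nonzero entries.
Hence the graph is acyclic iff `tr (A ^ k) = 0` for every `k ≥ 1`. Since
`tr (exp A) = d + ∑_{k ≥ 1} tr (A ^ k) / k!` is a series of nonnegative terms, this happens iff
`tr (exp A) = d`.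
-/

open Matrix

namespace Matrix

variable {n R : Type*} [Fintype n] [DecidableEq n]

theorem exists_walk_of_pow_apply_ne_zero [Semiring R] {A : Matrix n n R} (k : ℕ) (i j : n)
    (h : (A ^ k) i j ≠ 0) :
    ∃ v : ℕ → n, v 0 = i ∧ v k = j ∧ ∀ t < k, A (v t) (v (t + 1)) ≠ 0 := by
  induction k generalizing j with
  | zero =>
    refine ⟨fun _ => i, rfl, ?_, by omega⟩
    by_contra hij
    exact h (one_apply_ne hij)
  | succ k ih =>
    rw [pow_succ, mul_apply] at h
    obtain ⟨l, -, hl⟩ := Finset.exists_ne_zero_of_sum_ne_zero h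
    obtain ⟨v, hv0, hvk, hv⟩ := ih l (left_ne_zero_of_mul hl)
    refine ⟨Function.update v (k + 1) j, by simp [hv0], by simp, fun t ht => ?_⟩
    rw [Function.update_of_ne (by omega)]
    rcases Nat.lt_succ_iff_lt_or_eq.mp ht with ht | rfl
    · rw [Function.update_of_ne (by omega)]
      exact hv t ht
    · simpa [hvk] using right_ne_zero_of_mul hl

theorem pow_apply_pos_of_walk [Semiring R] [PartialOrder R] [IsStrictOrderedRing R]
    {A : Matrix n n R} (hA : ∀ i j, 0 ≤ A i j) (v : ℕ → n) (k : ℕ)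
    (hv : ∀ t < k, 0 < A (v t) (v (t + 1))) : 0 < (A ^ k) (v 0) (v k) := by
  induction k with
  | zero => simp
  | succ k ih =>
    rw [pow_succ, mul_apply]
    calc 0 < (A ^ k) (v 0) (v k) * A (v k) (v (k + 1)) :=
          mul_pos (ih fun t ht => hv t (by omega)) (hv k (by omega))
      _ ≤ ∑ l, (A ^ k) (v 0) l * A l (v (k + 1)) :=
          Finset.single_le_sum (f := fun l => (A ^ k) (v 0) l * A l (v (k + 1)))
            (fun l _ => mul_nonneg (pow_apply_nonneg hA k _ _) (hA _ _)) (Finset.mem_univ _)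

theorem trace_pow_nonneg [Semiring R] [PartialOrder R] [IsOrderedRing R] {A : Matrix n n R}
    (hA : ∀ i j, 0 ≤ A i j) (k : ℕ) : 0 ≤ trace (A ^ k) :=
  Finset.sum_nonneg fun i _ => pow_apply_nonneg hA k i i

section Exp

attribute [local instance] Matrix.linftyOpNormedRing Matrix.linftyOpNormedAlgebra

theorem hasSum_trace_exp {𝕂 : Type*} [RCLike 𝕂] (A : Matrix n n 𝕂) :
    HasSum (fun k => (k.factorial⁻¹ : 𝕂) * trace (A ^ k)) (trace (NormedSpace.exp A)) := by
  have h := (NormedSpace.exp_series_hasSum_exp' (𝕂 := 𝕂) A).map (traceAddMonoidHom n 𝕂)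
    continuous_id.matrix_trace
  simp only [Function.comp_def, traceAddMonoidHom_apply, trace_smul, smul_eq_mul] at h
  exact h

end Exp

theorem trace_exp_eq_card_iff {A : Matrix n n ℝ} (hA : ∀ i j, 0 ≤ A i j) :
    trace (NormedSpace.exp A) = Fintype.card n ↔ ∀ k, trace (A ^ (k + 1)) = 0 := by
  have hs := (hasSum_nat_add_iff' 1).mpr (hasSum_trace_exp A)
  simp only [Finset.sum_range_one, Nat.factorial_zero, Nat.cast_one, inv_one, pow_zero,
    trace_one, one_mul] at hs
  have hterms : ∀ k, 0 ≤ ((k + 1).factorial⁻¹ : ℝ) * trace (A ^ (k + 1)) := fun k =>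
    mul_nonneg (by positivity) (trace_pow_nonneg hA (k + 1))
  rw [← sub_eq_zero]
  constructor
  · intro h k
    rw [h, hasSum_zero_iff_of_nonneg hterms] at hs
    simpa [Nat.factorial_ne_zero] using congr_fun hs k
  · intro h
    exact hs.unique (by simp [h])

end Matrix

theorem diGraphAcyclic_iff_trace_pow_eq_zero {d : ℕ} {R : Type*} [Semiring R] [PartialOrder R]
    [IsStrictOrderedRing R] {A : Matrix (Fin d) (Fin d) R} (hA : ∀ i j, 0 ≤ A i j) :
    DiGraphAcyclic (fun i j => A i j ≠ 0) ↔ ∀ k, trace (A ^ (k + 1)) = 0 := by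
  constructor
  · intro hacyclic k
    by_contra htr
    obtain ⟨i, -, hi⟩ := Finset.exists_ne_zero_of_sum_ne_zero htr
    obtain ⟨v, hv0, hvk, hv⟩ := exists_walk_of_pow_apply_ne_zero (k + 1) i i hi
    exact hacyclic ⟨k + 1, v, by omega, by rw [hvk, hv0], hv⟩
  · rintro htr ⟨k, v, hk, hvk, hv⟩
    obtain ⟨k, rfl⟩ := Nat.exists_eq_add_of_le' hk
    have hcycle := pow_apply_pos_of_walk hA v (k + 1) fun t ht => (hA _ _).lt_of_ne' (hv t ht)
    rw [hvk] at hcycle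
    have hdiag : (A ^ (k + 1)) (v 0) (v 0) ≤ trace (A ^ (k + 1)) :=
      Finset.single_le_sum (fun i _ => pow_apply_nonneg hA (k + 1) i i) (Finset.mem_univ (v 0))
    exact (htr k ▸ hdiag).not_gt hcycle

/-- The directed graph whose edges are the nonzero entries of `U` is acyclic iff
`Tr e^{U ⊙ U} = d`, where `⊙` is the Hadamard product. -/
theorem acyclic_iff_trace_exp_hadamard_eq_dim {d : ℕ} (U : Matrix (Fin d) (Fin d) ℝ) :
    DiGraphAcyclic (fun i j => U i j ≠ 0) ↔
      Matrix.trace (NormedSpace.exp (Matrix.hadamard U U)) = d := by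
  have hnonneg : ∀ i j, 0 ≤ (U ⊙ U) i j := fun i j => mul_self_nonneg (U i j)
  have hedges : (fun i j => (U ⊙ U) i j ≠ 0) = fun i j => U i j ≠ 0 := by
    ext i j
    simp only [hadamard_apply, ne_eq, mul_self_eq_zero]
  rw [← hedges, diGraphAcyclic_iff_trace_pow_eq_zero hnonneg, ← trace_exp_eq_card_iff hnonneg,
    Fintype.card_fin]
end

section
/- Let $g : \mathbb{R} \to \mathbb{R}$ be any function with $g(0)$ arbitrary, and define the neural network function $f : \mathbb{R}^d \to \mathbb{R}^m$ by $f(x) = W^{(L+1)} g(\cdots g(W^{(2)} g(W^{(1)} x)) \cdots)$ where $g$ is applied entrywise. Let $C = |W^{(L+1)}| \cdots |W^{(1)}|$ be the connectivity matrix. If $C_{ki} = 0$, then the $k$-th output $f_k(x)$ does not depend on the $i$-th input $x_i$, i.e. for all $x, x' \in \mathbb{R}^d$ agreeing on all coordinates except coordinate $i$, $f_k(x) = f_k(x')$. -/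
/-- The connectivity matrix `C = |W^{(n)}| ⋯ |W^{(1)}|` of a stack of `n` weight matrices
with layer sizes `h 0, h 1, …, h n`. -/
noncomputable def connectivity : ∀ {n : ℕ} (h : Fin (n + 1) → ℕ)
    (W : ∀ i : Fin n, Matrix (Fin (h i.succ)) (Fin (h i.castSucc)) ℝ),
    Matrix (Fin (h (Fin.last n))) (Fin (h 0)) ℝ
  | 0, h, _ => (1 : Matrix (Fin (h 0)) (Fin (h 0)) ℝ)
  | n + 1, h, W =>
      (Matrix.of fun i j => |W (Fin.last n) i j|) *
        connectivity (fun i => h i.castSucc) (fun i => W i.castSucc)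

/-- The hidden-layer computation `x ↦ g(W^{(n)} g( ⋯ g(W^{(1)} x) ⋯ ))` of a stack of `n`
weight matrices, applying the nonlinearity `g` entrywise after each matrix. -/
noncomputable def netHidden (g : ℝ → ℝ) : ∀ {n : ℕ} (h : Fin (n + 1) → ℕ)
    (W : ∀ i : Fin n, Matrix (Fin (h i.succ)) (Fin (h i.castSucc)) ℝ),
    (Fin (h 0) → ℝ) → (Fin (h (Fin.last n)) → ℝ)
  | 0, _, _, x => x
  | n + 1, h, W, x => fun j =>
      g ((W (Fin.last n)).mulVec
        (netHidden g (fun i => h i.castSucc) (fun i => W i.castSucc) x) j)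

/-!
Since `C = |W^{(n)}| ⋯ |W^{(1)}|` is a product of nonnegative matrices, `C k l ≠ 0` holds as soon
as `W^{(n)} k j ≠ 0` and the entry `j l` of the shorter product is nonzero. So, by induction on
the depth, unit `k` depends only on the inputs `l` with `C k l ≠ 0`: a unit `j` that does see a
changed input enters `(W^{(n)} u) k` with weight `0`, and `g` is applied to equal arguments.
-/

section AbsMul

variable {R m n p : Type*} [CommRing R] [LinearOrder R] [IsStrictOrderedRing R]
  [Fintype n]

theorem Matrix.abs_mul_apply_nonneg {A : Matrix m n R} {B : Matrix n p R}
    (hB : ∀ j l, 0 ≤ B j l) (k : m) (l : p) : 0 ≤ ((Matrix.of fun a b => |A a b|) * B) k l :=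
  Finset.sum_nonneg fun j _ => mul_nonneg (abs_nonneg _) (hB j l)

theorem Matrix.abs_mul_apply_ne_zero {A : Matrix m n R} {B : Matrix n p R}
    (hB : ∀ j l, 0 ≤ B j l) {k : m} {j : n} {l : p} (hA : A k j ≠ 0) (hBjl : B j l ≠ 0) :
    ((Matrix.of fun a b => |A a b|) * B) k l ≠ 0 := by
  have hpath : 0 < |A k j| * B j l := mul_pos (abs_pos.mpr hA) ((hB j l).lt_of_ne' hBjl)
  exact (hpath.trans_le (Finset.single_le_sum (f := fun j' => |A k j'| * B j' l)
    (fun j' _ => mul_nonneg (abs_nonneg _) (hB j' l)) (Finset.mem_univ j))).ne'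

theorem Matrix.mulVec_apply_congr_of_abs_mul {q : Type*} {A : Matrix m n R} {B : Matrix n p R}
    (hB : ∀ j l, 0 ≤ B j l) {x x' : p → q} {u v : n → R}
    (huv : ∀ j, (∀ l, B j l ≠ 0 → x l = x' l) → u j = v j) {k : m}
    (hx : ∀ l, ((Matrix.of fun a b => |A a b|) * B) k l ≠ 0 → x l = x' l) :
    A.mulVec u k = A.mulVec v k := by
  refine Finset.sum_congr rfl fun j _ => ?_
  by_cases hA : A k j = 0
  · simp [hA]
  · rw [huv j fun l hBjl => hx l (abs_mul_apply_ne_zero hB hA hBjl)]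

end AbsMul

theorem connectivity_nonneg : ∀ {n : ℕ} (h : Fin (n + 1) → ℕ)
    (W : ∀ i : Fin n, Matrix (Fin (h i.succ)) (Fin (h i.castSucc)) ℝ)
    (k : Fin (h (Fin.last n))) (i : Fin (h 0)), 0 ≤ connectivity h W k i
  | 0, h, W, k, i => by
      rw [connectivity, Matrix.one_apply]
      positivity
  | n + 1, h, W, k, i =>
      Matrix.abs_mul_apply_nonneg (A := W (Fin.last n))
        (connectivity_nonneg (fun i => h i.castSucc) (fun i => W i.castSucc)) k i

theorem netHidden_apply_congr (g : ℝ → ℝ) : ∀ {n : ℕ} (h : Fin (n + 1) → ℕ)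
    (W : ∀ i : Fin n, Matrix (Fin (h i.succ)) (Fin (h i.castSucc)) ℝ)
    (k : Fin (h (Fin.last n))) {x x' : Fin (h 0) → ℝ},
    (∀ l, connectivity h W k l ≠ 0 → x l = x' l) → netHidden g h W x k = netHidden g h W x' k
  | 0, h, W, k, x, x', hx => hx k (by simp [connectivity])
  | n + 1, h, W, k, x, x', hx =>
      congrArg g (Matrix.mulVec_apply_congr_of_abs_mul (A := W (Fin.last n))
        (connectivity_nonneg (fun i => h i.castSucc) (fun i => W i.castSucc))
        (netHidden_apply_congr g (fun i => h i.castSucc) (fun i => W i.castSucc) · ) hx)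

/-- If the connectivity matrix entry `C k i` vanishes, then the `k`-th output of the neural
network `f(x) = W^{(L+1)} g(⋯ g(W^{(1)} x) ⋯)` does not depend on input coordinate `i`. -/
theorem output_independent_of_input_of_connectivity_zero {L : ℕ}
    (h : Fin (L + 2) → ℕ)
    (W : ∀ i : Fin (L + 1), Matrix (Fin (h i.succ)) (Fin (h i.castSucc)) ℝ)
    (g : ℝ → ℝ) (k : Fin (h (Fin.last (L + 1)))) (i : Fin (h 0))
    (hC : connectivity h W k i = 0) :
    ∀ x x' : Fin (h 0) → ℝ, (∀ l, l ≠ i → x l = x' l) →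
      (W (Fin.last L)).mulVec
          (netHidden g (fun l => h l.castSucc) (fun l => W l.castSucc) x) k =
        (W (Fin.last L)).mulVec
          (netHidden g (fun l => h l.castSucc) (fun l => W l.castSucc) x') k := by
  intro x x' hxx'
  exact Matrix.mulVec_apply_congr_of_abs_mul (A := W (Fin.last L))
    (connectivity_nonneg (fun l => h l.castSucc) (fun l => W l.castSucc))
    (netHidden_apply_congr g (fun l => h l.castSucc) (fun l => W l.castSucc) · )
    fun l hl => hxx' l fun hli => hl (hli ▸ hC)
end
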